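/- arXiv:1801.10484 — 4 statements merged into one kernel-verified Lean document; each statement's English description precedes it below -/
import Mathlib

section
/- Let α_i, α_j, p_{i,2}, p_{j,1}, p_{j,2} ≥ 0 with α_j > 0 and p_{i,2} ≥ 0. Then log₂(1 + p_{j,1}/α_j) + log₂(1 + p_{j,2}/(p_{i,2} + p_{j,1} + α_j)) ≥ log₂(1 + (p_{j,1} + p_{j,2})/(p_{i,2} + α_j)), with equality if p_{i,2} = 0. -/
/-! Writing `N = p_{i,2} + α_j`, the chain rule `C(p₁/N) + C(p₂/(N + p₁)) = C((p₁ + p₂)/N)` turns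
the right-hand side into `C(p_{j,1}/N) + C(p_{j,2}/(N + p_{j,1}))`, which differs from the
left-hand side only in the first term; there the interference `p_{i,2}` has been removed, so the
noise drops from `N` to `α_j ≤ N` and the rate can only grow. -/

open Real

theorem logb_one_add_div_add_logb_one_add_div (b : ℝ) {N p q : ℝ}
    (hN : N ≠ 0) (hNp : N + p ≠ 0) (hNpq : N + p + q ≠ 0) :
    logb b (1 + p / N) + logb b (1 + q / (N + p)) = logb b (1 + (p + q) / N) := by
  rw [one_add_div hN, one_add_div hNp, one_add_div hN, ← logb_mul (div_ne_zero hNp hN)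
    (div_ne_zero hNpq hNp), mul_comm, div_mul_div_cancel₀ hNp, add_assoc]

theorem logb_one_add_div_le_of_le {b p N M : ℝ} (hb : 1 < b) (hp : 0 ≤ p) (hM : 0 < M)
    (hMN : M ≤ N) : logb b (1 + p / N) ≤ logb b (1 + p / M) := by
  have hN : 0 < N := hM.trans_le hMN
  exact logb_le_logb_of_le hb (by positivity) (by gcongr)

theorem weak_user_sum_rate_ineq (αj pi2 pj1 pj2 : ℝ)
    (hαj : 0 < αj) (hpi2 : 0 ≤ pi2) (hpj1 : 0 ≤ pj1) (hpj2 : 0 ≤ pj2) :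
    logb 2 (1 + pj1 / αj) + logb 2 (1 + pj2 / (pi2 + pj1 + αj)) ≥
      logb 2 (1 + (pj1 + pj2) / (pi2 + αj)) ∧
    (pi2 = 0 →
      logb 2 (1 + pj1 / αj) + logb 2 (1 + pj2 / (pi2 + pj1 + αj)) =
        logb 2 (1 + (pj1 + pj2) / (pi2 + αj))) := by
  have chain_rule : ∀ N, 0 < N →
      logb 2 (1 + pj1 / N) + logb 2 (1 + pj2 / (N + pj1)) = logb 2 (1 + (pj1 + pj2) / N) :=
    fun N hN ↦ logb_one_add_div_add_logb_one_add_div 2 hN.ne' (by positivity) (by positivity)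
  rw [add_right_comm pi2]
  refine ⟨?_, fun h ↦ by simpa [h] using chain_rule αj hαj⟩
  rw [ge_iff_le, ← chain_rule (pi2 + αj) (by positivity)]
  gcongr ?_ + _
  exact logb_one_add_div_le_of_le one_lt_two hpj1 hαj (by linarith)
end

section
/- Let α_i < α_j be positive reals and p_{i,1}, p_{i,2}, p_{j,1}, p_{j,2} ≥ 0 with p_{i,2} > 0 and p_{j,2} > 0. Then the two inequalities log₂(1 + p_{i,2}/(p_{j,1} + p_{j,2} + α_j)) > log₂(1 + p_{i,2}/(p_{i,1} + α_i)) and log₂(1 + p_{j,2}/(p_{i,1} + p_{i,2} + α_i)) > log₂(1 + p_{j,2}/(p_{j,1} + α_j)) cannot both hold. -/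
open Real

theorem incompatible_decoding_orders (αi αj pi1 pi2 pj1 pj2 : ℝ)
    (hαi : 0 < αi) (hij : αi < αj)
    (hpi1 : 0 ≤ pi1) (hpi2 : 0 < pi2) (hpj1 : 0 ≤ pj1) (hpj2 : 0 < pj2) :
    ¬ (logb 2 (1 + pi2 / (pj1 + pj2 + αj)) > logb 2 (1 + pi2 / (pi1 + αi)) ∧
       logb 2 (1 + pj2 / (pi1 + pi2 + αi)) > logb 2 (1 + pj2 / (pj1 + αj))) := by
  rintro ⟨h1, h2⟩
  have hαj : 0 < αj := hαi.trans hij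
  have d1 : 0 < pj1 + pj2 + αj := by linarith
  have d2 : 0 < pi1 + αi := by linarith
  have d3 : 0 < pi1 + pi2 + αi := by linarith
  have d4 : 0 < pj1 + αj := by linarith
  have e1 : pi2 / (pj1 + pj2 + αj) > pi2 / (pi1 + αi) := by
    have := (Real.logb_lt_logb_iff (by norm_num : (1:ℝ) < 2)
      (by positivity : (0:ℝ) < 1 + pi2 / (pi1 + αi))
      (by positivity : (0:ℝ) < 1 + pi2 / (pj1 + pj2 + αj))).mp h1
    linarith
  have e2 : pj2 / (pi1 + pi2 + αi) > pj2 / (pj1 + αj) := by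
    have := (Real.logb_lt_logb_iff (by norm_num : (1:ℝ) < 2)
      (by positivity : (0:ℝ) < 1 + pj2 / (pj1 + αj))
      (by positivity : (0:ℝ) < 1 + pj2 / (pi1 + pi2 + αi))).mp h2
    linarith
  have f1 : pj1 + pj2 + αj < pi1 + αi := by
    by_contra h
    push_neg at h
    exact absurd e1 (not_lt.mpr (div_le_div_of_nonneg_left hpi2.le d2 h))
  have f2 : pi1 + pi2 + αi < pj1 + αj := by
    by_contra h
    push_neg at h
    exact absurd e2 (not_lt.mpr (div_le_div_of_nonneg_left hpj2.le d4 h))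
  linarith
end

section
/- Let 0 < α_i ≤ α_j and P ≥ 0. For all p_i, p_j ≥ 0 with p_i + p_j ≤ P, log₂(1 + p_i/α_i) + log₂(1 + p_j/(p_i + α_j)) ≤ log₂(1 + P/α_i), i.e., the NOMA sum rate of the two-user degraded broadcast channel is maximized by allocating all power to the strong user. -/
open Real

theorem noma_sum_rate_bound (αi αj P pi pj : ℝ)
    (hαi : 0 < αi) (hij : αi ≤ αj) (hP : 0 ≤ P)
    (hpi : 0 ≤ pi) (hpj : 0 ≤ pj) (hsum : pi + pj ≤ P) :
    logb 2 (1 + pi / αi) + logb 2 (1 + pj / (pi + αj)) ≤ logb 2 (1 + P / αi) := by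
  have hαj : 0 < αj := lt_of_lt_of_le hαi hij
  have hd : 0 < pi + αj := by linarith
  have hx : (0:ℝ) < 1 + pi / αi := by positivity
  have hy : (0:ℝ) < 1 + pj / (pi + αj) := by positivity
  have key : (1 + pi / αi) * (1 + pj / (pi + αj)) ≤ 1 + P / αi := by
    have h2 : (αi + pi) * (pi + αj + pj) ≤ (αi + P) * (pi + αj) := by
      nlinarith [mul_nonneg hpj (sub_nonneg.mpr hij), mul_nonneg hpi (sub_nonneg.mpr hsum), mul_nonneg hαj.le (sub_nonneg.mpr hsum)]
    have h1 : (1 + pi / αi) * (1 + pj / (pi + αj)) = (αi + pi) * (pi + αj + pj) / (αi * (pi + αj)) := by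
      field_simp
    have h3 : (1 : ℝ) + P / αi = (αi + P) * (pi + αj) / (αi * (pi + αj)) := by
      field_simp
    rw [h1, h3]
    exact div_le_div_of_nonneg_right h2 (by positivity) |>.trans_eq rfl
  calc logb 2 (1 + pi / αi) + logb 2 (1 + pj / (pi + αj))
      = logb 2 ((1 + pi / αi) * (1 + pj / (pi + αj))) := (logb_mul (ne_of_gt hx) (ne_of_gt hy)).symm
    _ ≤ logb 2 (1 + P / αi) := logb_le_logb_of_le one_lt_two (mul_pos hx hy) key
end

section
/- Let α_i < α_j be positive reals, and p_{i,1}, p_{i,2}, p_{j,1}, p_{j,2} ≥ 0. Every rate tuple (r_{i,1}, r_{i,2}, r_{j,1}, r_{j,2}) satisfying r_{i,1} ≤ C(p_{i,1}/(p_{i,2}+p_{j,2}+α_i)), r_{i,2} ≤ C(p_{i,2}/α_i), r_{j,1} ≤ C(p_{j,1}/(p_{i,2}+p_{j,2}+α_j)), r_{j,2} ≤ C(p_{j,2}/(p_{i,2}+α_j)) also satisfies r_{i,1} ≤ C(p_{i,1}/(p_{i,2}+p_{j,2}+α_i)), r_{i,2} ≤ C(p_{i,2}/α_i), r_{j,1}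 ≤ C(p_{j,1}/(p_{i,2}+α_j)), r_{j,2} ≤ C(p_{j,2}/(p_{i,2}+α_j)), and r_{j,1}+r_{j,2} ≤ C((p_{j,1}+p_{j,2})/(p_{i,2}+α_j)), where C(x) = log₂(1+x). -/
open Real

theorem rate_region_inclusion_RI5_RI1 (αi αj pi1 pi2 pj1 pj2 ri1 ri2 rj1 rj2 : ℝ)
    (hαi : 0 < αi) (hij : αi < αj)
    (hpi1 : 0 ≤ pi1) (hpi2 : 0 ≤ pi2) (hpj1 : 0 ≤ pj1) (hpj2 : 0 ≤ pj2)
    (h1 : ri1 ≤ logb 2 (1 + pi1 / (pi2 + pj2 + αi)))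
    (h2 : ri2 ≤ logb 2 (1 + pi2 / αi))
    (h3 : rj1 ≤ logb 2 (1 + pj1 / (pi2 + pj2 + αj)))
    (h4 : rj2 ≤ logb 2 (1 + pj2 / (pi2 + αj))) :
    ri1 ≤ logb 2 (1 + pi1 / (pi2 + pj2 + αi)) ∧
    ri2 ≤ logb 2 (1 + pi2 / αi) ∧
    rj1 ≤ logb 2 (1 + pj1 / (pi2 + αj)) ∧
    rj2 ≤ logb 2 (1 + pj2 / (pi2 + αj)) ∧
    rj1 + rj2 ≤ logb 2 (1 + (pj1 + pj2) / (pi2 + αj)) := by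
  have hαj : 0 < αj := hαi.trans hij
  have ha : 0 < pi2 + αj := by linarith
  have hb : 0 < pi2 + pj2 + αj := by linarith
  have hmono : logb 2 (1 + pj1 / (pi2 + pj2 + αj)) ≤ logb 2 (1 + pj1 / (pi2 + αj)) := by
    apply logb_le_logb_of_le one_lt_two (by positivity)
    have : pj1 / (pi2 + pj2 + αj) ≤ pj1 / (pi2 + αj) :=
      div_le_div_of_nonneg_left hpj1 ha (by linarith) |>.trans_eq rfl
    linarith
  have h3' : rj1 ≤ logb 2 (1 + pj1 / (pi2 + αj)) := h3.trans hmono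
  refine ⟨h1, h2, h3', h4, ?_⟩
  have key : logb 2 (1 + pj1 / (pi2 + pj2 + αj)) + logb 2 (1 + pj2 / (pi2 + αj))
      = logb 2 (1 + (pj1 + pj2) / (pi2 + αj)) := by
    rw [← logb_mul]
    · congr 1
      field_simp
      ring
    · positivity
    · positivity
  calc rj1 + rj2 ≤ logb 2 (1 + pj1 / (pi2 + pj2 + αj)) + logb 2 (1 + pj2 / (pi2 + αj)) :=
        add_le_add h3 h4
    _ = _ := key
end
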